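/- arXiv:2307.11428 — 2 statements merged into one kernel-verified Lean document; each statement's English description precedes it below -/
import Mathlib

section
/- For the map F on [0,11.5]² defined piecewise by F(p) = (1,0) if p₁+p₂ ≥ 20 and p₁ ≤ p₂; (0,1) if p₁+p₂ ≥ 20 and p₁ > p₂; (11.5,11) if p₁+p₂ < 20 and p₁ ≤ p₂; (11,11.5) if p₁+p₂ < 20 and p₁ > p₂, the point p* = (10,10) is the unique fixed point of the averaged iteration limit: specifically, the sequence p_{t+1} = (1/(t+1))·F(p_t) + (1 − 1/(t+1))·p_t with p₀ = (0,0) converges to (10,10). -/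
/-!
Since `(t+1) • p_{t+1} = F(p_t) + t • p_t`, for every affine functional `φ` the quantity
`x_t = t · φ(p_t)` moves by the increment `φ(F(p_t))`. If `F` always pushes `φ` against its own
sign, with steps of size at most `c`, then `x_t` can never leave `[-c, c]`, so `|φ(p_t)| ≤ c / t`.
Here this applies to `p₁ + p₂ - 20` (steps `-19` or `2.5`) and to `p₁ - p₂` (steps `±1` or `±0.5`),
and these two functionals vanishing pins down `(10, 10)`.
-/

open Filter Topology

/-- The piecewise-constant expected-closing-price map of Example 1. -/
noncomputable def exF (p : ℝ × ℝ) : ℝ × ℝ :=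
  if 20 ≤ p.1 + p.2 then
    (if p.1 ≤ p.2 then (1, 0) else (0, 1))
  else
    (if p.1 ≤ p.2 then (11.5, 11) else (11, 11.5))

/-- The averaged price-prediction iteration `p₀ = (0,0)`,
`p_{t+1} = (1/(t+1))·F(p_t) + (1 − 1/(t+1))·p_t`. -/
noncomputable def exSeq : ℕ → ℝ × ℝ
  | 0 => (0, 0)
  | t + 1 => (1 / ((t : ℝ) + 1)) • exF (exSeq t) + (1 - 1 / ((t : ℝ) + 1)) • exSeq t

theorem abs_add_le_of_mul_nonpos {x δ c : ℝ} (hx : |x| ≤ c) (hδ : |δ| ≤ c) (h : x * δ ≤ 0) :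
    |x + δ| ≤ c := by
  rw [abs_le] at *
  rcases mul_nonpos_iff.mp h with ⟨hx0, hδ0⟩ | ⟨hx0, hδ0⟩ <;> constructor <;> linarith

theorem tendsto_zero_of_natCast_mul_abs_le {x : ℕ → ℝ} {c : ℝ} (h : ∀ t : ℕ, t * |x t| ≤ c) :
    Tendsto x atTop (𝓝 0) := by
  refine squeeze_zero_norm' ?_ (tendsto_const_div_atTop_nhds_zero_nat c)
  filter_upwards [eventually_gt_atTop 0] with t ht
  rw [Real.norm_eq_abs, le_div_iff₀ (by exact_mod_cast ht), mul_comm]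
  exact h t

section Averaging

variable {E : Type*} [AddCommGroup E] [Module ℝ E] {F : E → E} {p : ℕ → E}

theorem AffineMap.natCast_mul_apply_succ_of_average (φ : E →ᵃ[ℝ] ℝ)
    (hp : ∀ t : ℕ, p (t + 1) = (1 / ((t : ℝ) + 1)) • F (p t) + (1 - 1 / ((t : ℝ) + 1)) • p t)
    (t : ℕ) : ((t + 1 : ℕ) : ℝ) * φ (p (t + 1)) = t * φ (p t) + φ (F (p t)) := by
  have hφ : φ (p (t + 1)) =
      (1 - 1 / ((t : ℝ) + 1)) * φ (p t) + 1 / ((t : ℝ) + 1) * φ (F (p t)) := by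
    rw [hp, add_comm, ← AffineMap.lineMap_apply_module, AffineMap.apply_lineMap,
      AffineMap.lineMap_apply_module, smul_eq_mul, smul_eq_mul]
  rw [hφ]
  push_cast
  field_simp
  ring

theorem AffineMap.natCast_mul_abs_le_of_average (φ : E →ᵃ[ℝ] ℝ) {c : ℝ}
    (hp : ∀ t : ℕ, p (t + 1) = (1 / ((t : ℝ) + 1)) • F (p t) + (1 - 1 / ((t : ℝ) + 1)) • p t)
    (hbound : ∀ q, |φ (F q)| ≤ c) (hsign : ∀ q, φ q * φ (F q) ≤ 0) (t : ℕ) :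
    t * |φ (p t)| ≤ c := by
  induction t with
  | zero => simpa using (abs_nonneg _).trans (hbound 0)
  | succ t ih =>
    have ht : (0 : ℝ) ≤ t := t.cast_nonneg
    rw [← abs_of_nonneg (Nat.cast_nonneg (α := ℝ) (t + 1)), ← abs_mul,
      φ.natCast_mul_apply_succ_of_average hp]
    refine abs_add_le_of_mul_nonpos ?_ (hbound _) ?_
    · rwa [abs_mul, abs_of_nonneg ht]
    · rw [mul_assoc]
      exact mul_nonpos_of_nonneg_of_nonpos ht (hsign _)

end Averaging

def priceSumExcess : ℝ × ℝ →ᵃ[ℝ] ℝ :=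
  (LinearMap.fst ℝ ℝ ℝ + LinearMap.snd ℝ ℝ ℝ).toAffineMap - AffineMap.const ℝ (ℝ × ℝ) 20

def priceSpread : ℝ × ℝ →ᵃ[ℝ] ℝ :=
  (LinearMap.fst ℝ ℝ ℝ - LinearMap.snd ℝ ℝ ℝ).toAffineMap

@[simp]
theorem priceSumExcess_apply (q : ℝ × ℝ) : priceSumExcess q = q.1 + q.2 - 20 := by
  simp [priceSumExcess]

@[simp]
theorem priceSpread_apply (q : ℝ × ℝ) : priceSpread q = q.1 - q.2 := by
  simp [priceSpread]

theorem abs_priceSumExcess_exF_le (q : ℝ × ℝ) : |priceSumExcess (exF q)| ≤ 19 := by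
  unfold exF
  split_ifs <;> norm_num [abs_le]

theorem priceSumExcess_mul_priceSumExcess_exF_nonpos (q : ℝ × ℝ) :
    priceSumExcess q * priceSumExcess (exF q) ≤ 0 := by
  unfold exF
  split_ifs <;> simp only [priceSumExcess_apply] <;> nlinarith

theorem abs_priceSpread_exF_le (q : ℝ × ℝ) : |priceSpread (exF q)| ≤ 1 := by
  unfold exF
  split_ifs <;> norm_num [abs_le]

theorem priceSpread_mul_priceSpread_exF_nonpos (q : ℝ × ℝ) :
    priceSpread q * priceSpread (exF q) ≤ 0 := by
  unfold exF
  split_ifs <;> simp only [priceSpread_apply] <;> nlinarith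

/-- In Example 1 the averaged iteration converges to the unique fixed point `(10,10)`. -/
theorem exSeq_tendsto : Filter.Tendsto exSeq Filter.atTop (nhds ((10 : ℝ), (10 : ℝ))) := by
  have hp : ∀ t : ℕ, exSeq (t + 1) =
      (1 / ((t : ℝ) + 1)) • exF (exSeq t) + (1 - 1 / ((t : ℝ) + 1)) • exSeq t := fun _ => rfl
  have hsum := tendsto_zero_of_natCast_mul_abs_le <| priceSumExcess.natCast_mul_abs_le_of_average
    hp abs_priceSumExcess_exF_le priceSumExcess_mul_priceSumExcess_exF_nonpos
  have hspread := tendsto_zero_of_natCast_mul_abs_le <| priceSpread.natCast_mul_abs_le_of_average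
    hp abs_priceSpread_exF_le priceSpread_mul_priceSpread_exF_nonpos
  have hfst : Tendsto (fun t => (exSeq t).1) atTop (𝓝 10) := by
    convert ((hsum.add hspread).div_const 2).const_add 10 using 1
    · ext t
      simp only [priceSumExcess_apply, priceSpread_apply]
      ring
    · norm_num
  have hsnd : Tendsto (fun t => (exSeq t).2) atTop (𝓝 10) := by
    convert ((hsum.sub hspread).div_const 2).const_add 10 using 1
    · ext t
      simp only [priceSumExcess_apply, priceSpread_apply]
      ring
    · norm_num
  exact hfst.prodMk_nhds hsnd
end

section
/- For the averaged iteration p_{t+1} = (1/(t+1))F(p_t) + (1−1/(t+1))p_t with p₀ = (0,0) and F as in Example 1, for all t ≥ 1 the first coordinate p_t¹ satisfies 10 − 10/t ≤ p_t¹ ≤ 10 + 7/(4t); hence p_t¹ → 10. -/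
open Set Filter Topology

theorem mem_Icc_of_step_toward {u : ℕ → ℝ} {a b c : ℝ} {n : ℕ}
    (hn : u n ∈ Icc (c - a) (c + b))
    (hstep : ∀ t ≥ n, (u t ≤ c ∧ u (t + 1) - u t ∈ Icc 0 b) ∨
      (c ≤ u t ∧ u (t + 1) - u t ∈ Icc (-a) 0)) :
    ∀ t ≥ n, u t ∈ Icc (c - a) (c + b) := by
  intro t ht
  induction t, ht using Nat.le_induction with
  | base => exact hn
  | succ t ht ih =>
    obtain ⟨ih₁, ih₂⟩ := ih
    rcases hstep t ht with ⟨hle, hd₁, hd₂⟩ | ⟨hge, hd₁, hd₂⟩ <;>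
      exact ⟨by linarith, by linarith⟩

theorem exSeq_succ_smul (t : ℕ) :
    ((t : ℝ) + 1) • exSeq (t + 1) = (t : ℝ) • exSeq t + exF (exSeq t) := by
  have ht : (t : ℝ) + 1 ≠ 0 := by positivity
  rw [exSeq, smul_add, smul_smul, smul_smul, mul_one_div_cancel ht, one_smul, mul_sub, mul_one,
    mul_one_div_cancel ht, add_sub_cancel_right, add_comm]

noncomputable def exSeqExcess (t : ℕ) : ℝ :=
  t * ((exSeq t).1 + (exSeq t).2 - 20)

noncomputable def exSeqGap (t : ℕ) : ℝ :=
  t * ((exSeq t).1 - (exSeq t).2)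

theorem exSeqExcess_succ_sub (t : ℕ) :
    exSeqExcess (t + 1) - exSeqExcess t = (exF (exSeq t)).1 + (exF (exSeq t)).2 - 20 := by
  obtain ⟨h₁, h₂⟩ := Prod.ext_iff.mp (exSeq_succ_smul t)
  simp only [Prod.fst_add, Prod.snd_add, Prod.smul_fst, Prod.smul_snd, smul_eq_mul] at h₁ h₂
  simp only [exSeqExcess, Nat.cast_succ]
  linear_combination h₁ + h₂

theorem exSeqGap_succ_sub (t : ℕ) :
    exSeqGap (t + 1) - exSeqGap t = (exF (exSeq t)).1 - (exF (exSeq t)).2 := by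
  obtain ⟨h₁, h₂⟩ := Prod.ext_iff.mp (exSeq_succ_smul t)
  simp only [Prod.fst_add, Prod.snd_add, Prod.smul_fst, Prod.smul_snd, smul_eq_mul] at h₁ h₂
  simp only [exSeqGap, Nat.cast_succ]
  linear_combination h₁ - h₂

theorem exSeqExcess_mem_Icc : ∀ t ≥ 1, exSeqExcess t ∈ Icc (0 - 19) (0 + 5 / 2) := by
  refine mem_Icc_of_step_toward (by norm_num [exSeqExcess, exSeq, exF]) fun t ht => ?_
  have htpos : (0 : ℝ) < t := by exact_mod_cast ht
  have hsign : 20 ≤ (exSeq t).1 + (exSeq t).2 ↔ 0 ≤ exSeqExcess t := by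
    rw [exSeqExcess, mul_nonneg_iff_of_pos_left htpos, sub_nonneg]
  rw [exSeqExcess_succ_sub]
  by_cases hs : 20 ≤ (exSeq t).1 + (exSeq t).2
  · right
    refine ⟨hsign.mp hs, ?_⟩
    simp only [exF, if_pos hs]
    split_ifs <;> norm_num
  · left
    refine ⟨(not_le.mp (hsign.not.mp hs)).le, ?_⟩
    simp only [exF, if_neg hs]
    split_ifs <;> norm_num

theorem exSeqGap_mem_Icc : ∀ t ≥ 1, exSeqGap t ∈ Icc (0 - 1) (0 + 1) := by
  refine mem_Icc_of_step_toward (by norm_num [exSeqGap, exSeq, exF]) fun t ht => ?_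
  have htpos : (0 : ℝ) < t := by exact_mod_cast ht
  have hsign : (exSeq t).1 ≤ (exSeq t).2 ↔ exSeqGap t ≤ 0 := by
    rw [exSeqGap, ← mul_zero (t : ℝ), mul_le_mul_iff_of_pos_left htpos, sub_nonpos]
  rw [exSeqGap_succ_sub]
  by_cases hd : (exSeq t).1 ≤ (exSeq t).2
  · left
    refine ⟨hsign.mp hd, ?_⟩
    simp only [exF, if_pos hd]
    split_ifs <;> norm_num
  · right
    refine ⟨(not_le.mp (hsign.not.mp hd)).le, ?_⟩
    simp only [exF, if_neg hd]
    split_ifs <;> norm_num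

theorem exSeq_fst_bounds_of_one_le (t : ℕ) (ht : 1 ≤ t) :
    10 - 10 / (t : ℝ) ≤ (exSeq t).1 ∧ (exSeq t).1 ≤ 10 + 7 / (4 * (t : ℝ)) := by
  have htpos : (0 : ℝ) < t := by exact_mod_cast ht
  obtain ⟨hs₁, hs₂⟩ := exSeqExcess_mem_Icc t ht
  obtain ⟨hg₁, hg₂⟩ := exSeqGap_mem_Icc t ht
  have hfst : 2 * t * (exSeq t).1 = 20 * t + exSeqExcess t + exSeqGap t := by
    rw [exSeqExcess, exSeqGap]; ring
  constructor
  · rw [sub_le_comm, le_div_iff₀ htpos]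
    linarith
  · rw [← sub_le_iff_le_add', le_div_iff₀ (by positivity)]
    linarith

/-- For all `t ≥ 1` the first coordinate of the iteration satisfies
`10 − 10/t ≤ p_t¹ ≤ 10 + 7/(4t)`; hence `p_t¹ → 10`. -/
theorem exSeq_fst_bounds :
    (∀ t : ℕ, 1 ≤ t → 10 - 10 / (t : ℝ) ≤ (exSeq t).1 ∧ (exSeq t).1 ≤ 10 + 7 / (4 * (t : ℝ))) ∧
      Filter.Tendsto (fun t => (exSeq t).1) Filter.atTop (nhds (10 : ℝ)) := by
  refine ⟨exSeq_fst_bounds_of_one_le, ?_⟩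
  have hlower : Tendsto (fun t : ℕ => 10 - 10 / (t : ℝ)) atTop (𝓝 10) := by
    simpa using tendsto_const_nhds.sub (tendsto_const_div_atTop_nhds_zero_nat (10 : ℝ))
  have hupper : Tendsto (fun t : ℕ => 10 + 7 / (4 * (t : ℝ))) atTop (𝓝 10) := by
    simpa [div_mul_eq_div_div_swap, div_right_comm] using
      tendsto_const_nhds.add (tendsto_const_div_atTop_nhds_zero_nat ((7 : ℝ) / 4))
  refine tendsto_of_tendsto_of_tendsto_of_le_of_le' hlower hupper ?_ ?_ <;>
    filter_upwards [eventually_ge_atTop 1] with t ht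
  exacts [(exSeq_fst_bounds_of_one_le t ht).1, (exSeq_fst_bounds_of_one_le t ht).2]
end
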